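/- Let K, K' ⊆ ℝ₊ⁿ be anti-blocking bodies. Then conv(K ∪ (−K')) = ⋃_E conv(P_E K ∪ P_{E⊥}(−K')), the union over all coordinate subspaces E of ℝⁿ. -/

import Mathlib

open Set MeasureTheory Pointwise
open scoped RealInnerProductSpace

/-
A point of `conv(K ∪ -K')` is `z = a x - b y` with `x ∈ K`, `y ∈ K'`, `a + b = 1`. Split `z` along
the sign pattern of its coordinates: with `S = {i | 0 ≤ zᵢ}`, the positive part `P_S z` lies
coordinatewise between `0` and `a x`, and the negative part `-P_{Sᶜ} z` between `0` and `b y`.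
Since anti-blocking bodies are downward closed, `P_S z = a p` and `-P_{Sᶜ} z = b q` with `p ∈ K`,
`q ∈ K'`, so `z` lies on the segment from `P_S p` to `P_{Sᶜ}(-q)`. The reverse inclusion holds
because coordinate projections map an anti-blocking body into itself.
-/

def IsAntiBlocking (n : ℕ) (K : Set (EuclideanSpace ℝ (Fin n))) : Prop :=
  IsCompact K ∧ Convex ℝ K ∧ (0 : EuclideanSpace ℝ (Fin n)) ∈ K ∧
    (∀ y ∈ K, ∀ i, (0:ℝ) ≤ y i) ∧
    ∀ y ∈ K, ∀ x : EuclideanSpace ℝ (Fin n),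
      (∀ i, 0 ≤ x i) → (∀ i, x i ≤ y i) → x ∈ K

def coordProj {n : ℕ} (S : Finset (Fin n)) (x : EuclideanSpace ℝ (Fin n)) :
    EuclideanSpace ℝ (Fin n) :=
  WithLp.toLp 2 (fun i => if i ∈ S then x i else 0)

section coordProj

variable {n : ℕ} (S : Finset (Fin n)) (x : EuclideanSpace ℝ (Fin n))

@[simp]
lemma coordProj_apply (i : Fin n) : coordProj S x i = if i ∈ S then x i else 0 := rfl

lemma coordProj_smul (c : ℝ) : coordProj S (c • x) = c • coordProj S x := by
  ext i; by_cases hi : i ∈ S <;> simp [hi]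

lemma coordProj_neg : coordProj S (-x) = -coordProj S x := by
  ext i; by_cases hi : i ∈ S <;> simp [hi]

lemma coordProj_coordProj : coordProj S (coordProj S x) = coordProj S x := by
  ext i; by_cases hi : i ∈ S <;> simp [hi]

lemma coordProj_add_coordProj_compl : coordProj S x + coordProj Sᶜ x = x := by
  ext i; by_cases hi : i ∈ S <;> simp [hi]

end coordProj

namespace IsAntiBlocking

variable {n : ℕ} {K : Set (EuclideanSpace ℝ (Fin n))}

lemma convex (hK : IsAntiBlocking n K) : Convex ℝ K := hK.2.1

lemma zero_mem (hK : IsAntiBlocking n K) : 0 ∈ K := hK.2.2.1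

lemma nonneg (hK : IsAntiBlocking n K) {x : EuclideanSpace ℝ (Fin n)} (hx : x ∈ K) (i : Fin n) :
    0 ≤ x i :=
  hK.2.2.2.1 x hx i

lemma coordProj_mem (hK : IsAntiBlocking n K) (S : Finset (Fin n))
    {x : EuclideanSpace ℝ (Fin n)} (hx : x ∈ K) : coordProj S x ∈ K := by
  obtain ⟨-, -, -, hpos, hdown⟩ := hK
  refine hdown x hx _ (fun i => ?_) (fun i => ?_) <;> by_cases hi : i ∈ S <;>
    simp [hi, hpos x hx i]

lemma mem_smul_of_le (hK : IsAntiBlocking n K) {x u : EuclideanSpace ℝ (Fin n)} (hx : x ∈ K)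
    {c : ℝ} (hc : 0 ≤ c) (hu0 : ∀ i, 0 ≤ u i) (hux : ∀ i, u i ≤ c * x i) :
    ∃ p ∈ K, c • p = u := by
  obtain ⟨-, -, h0, -, hdown⟩ := hK
  rcases hc.eq_or_lt with rfl | hc
  · refine ⟨0, h0, ?_⟩
    ext i
    simpa using (le_antisymm (by simpa using hux i) (hu0 i)).symm
  · refine ⟨c⁻¹ • u, hdown x hx _ (fun i => ?_) (fun i => ?_), smul_inv_smul₀ hc.ne' u⟩
    · simpa using mul_nonneg (inv_nonneg.2 hc.le) (hu0 i)
    · simpa [inv_mul_le_iff₀ hc] using hux i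

end IsAntiBlocking

lemma smul_add_smul_neg_mem_iUnion_convexHull_coordProj {n : ℕ}
    {K K' : Set (EuclideanSpace ℝ (Fin n))} (hK : IsAntiBlocking n K)
    (hK' : IsAntiBlocking n K') {x y : EuclideanSpace ℝ (Fin n)} (hx : x ∈ K) (hy : y ∈ K')
    {a b : ℝ} (ha : 0 ≤ a) (hb : 0 ≤ b) (hab : a + b = 1) :
    a • x + b • -y ∈ ⋃ S : Finset (Fin n),
      convexHull ℝ (coordProj S '' K ∪ coordProj Sᶜ '' (-K')) := by
  set z := a • x + b • -y
  have hz (i : Fin n) : z i = a * x i - b * y i := by simp [z, sub_eq_add_neg]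
  have hx0 (i : Fin n) : 0 ≤ a * x i := mul_nonneg ha (hK.nonneg hx i)
  have hy0 (i : Fin n) : 0 ≤ b * y i := mul_nonneg hb (hK'.nonneg hy i)
  set S := Finset.univ.filter fun i => 0 ≤ z i
  have hS (i : Fin n) : i ∈ S ↔ 0 ≤ z i := by simp [S]
  obtain ⟨p, hp, hpz⟩ : ∃ p ∈ K, a • p = coordProj S z := by
    refine hK.mem_smul_of_le hx ha (fun i => ?_) (fun i => ?_) <;>
      simp only [coordProj_apply, hS] <;> split_ifs <;> linarith [hz i, hx0 i, hy0 i]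
  obtain ⟨q, hq, hqz⟩ : ∃ q ∈ K', b • q = -coordProj Sᶜ z := by
    refine hK'.mem_smul_of_le hy hb (fun i => ?_) (fun i => ?_) <;>
      simp only [PiLp.neg_apply, coordProj_apply, Finset.mem_compl, hS] <;> split_ifs <;>
      linarith [hz i, hx0 i, hy0 i]
  have hseg : z = a • coordProj S p + b • coordProj Sᶜ (-q) := by
    rw [← coordProj_smul, ← coordProj_smul, smul_neg, hpz, hqz, neg_neg, coordProj_coordProj,
      coordProj_coordProj, coordProj_add_coordProj_compl]
  exact mem_iUnion.2 ⟨S, segment_subset_convexHull (mem_union_left _ (mem_image_of_mem _ hp))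
    (mem_union_right _ (mem_image_of_mem _ (neg_mem_neg.2 hq))) ⟨a, b, ha, hb, hab, hseg.symm⟩⟩

/-- Decomposition of the convex hull of `K ∪ (-K')` for anti-blocking bodies over all
coordinate subspaces. -/
theorem antiBlocking_convexHull_decomposition {n : ℕ}
    {K K' : Set (EuclideanSpace ℝ (Fin n))}
    (hK : IsAntiBlocking n K) (hK' : IsAntiBlocking n K') :
    convexHull ℝ (K ∪ (-K')) = ⋃ S : Finset (Fin n),
      convexHull ℝ (coordProj S '' K ∪ coordProj Sᶜ '' (-K')) := by
  refine Subset.antisymm ?_ (iUnion_subset fun S => convexHull_mono (union_subset_union ?_ ?_))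
  · rw [hK.convex.convexHull_union hK'.convex.neg ⟨0, hK.zero_mem⟩ ⟨0, by simpa using hK'.zero_mem⟩]
    intro z hz
    obtain ⟨x, hx, y, hy, a, b, ha, hb, hab, rfl⟩ := mem_convexJoin.1 hz
    rw [← neg_neg y]
    exact smul_add_smul_neg_mem_iUnion_convexHull_coordProj hK hK' hx (mem_neg.1 hy) ha hb hab
  · rintro _ ⟨x, hx, rfl⟩
    exact hK.coordProj_mem S hx
  · rintro _ ⟨x, hx, rfl⟩
    rw [← neg_neg x, coordProj_neg]
    exact neg_mem_neg.2 (hK'.coordProj_mem _ hx)
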